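/- arXiv:2502.06462 — 4 statements merged into one kernel-verified Lean document; each statement's English description precedes it below -/
import Mathlib

section
/- Let p, l, s be natural numbers with l ≤ p and s ≤ p, and set n := min(l, s). Let H be a real p×l matrix with rank H = l and let H⊥ be a real p×(p−l) matrix with rank H⊥ = p−l and Hᵀ·H⊥ = 0. Define the sets of real p×s matrices Ψ := {ψ : rank ψ = s}, Ψ₀₁ := {ψ ∈ Ψ : rank(Hᵀ·ψ) = n}, and Ψ₀₂ := {ψ ∈ Ψ : rank(H⊥ᵀ·ψ) = s − n}. Then: (i) Ψ₀₂ ⊆ Ψ₀₁ (equivalently, (Ψ \ Ψ₀₁) ∩ Ψ₀₂ = ∅); (ii) Ψ \ (Ψ₀₁ ∩ Ψ₀₂) = Ψ \ Ψ₀₂; (iii) Ψ \ Ψ₀₂ = (Ψ \ Ψ₀₁) ∪ (Ψ₀₁ \ Ψ₀₂). -/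
open Matrix

section Aux

variable {p l : ℕ} (H : Matrix (Fin p) (Fin l) ℝ)
  (Hperp : Matrix (Fin p) (Fin (p - l)) ℝ)

/-- If `H` and `Hperp` have full column ranks `l` and `p - l` and are orthogonal,
then the kernels of `Hᵀ` and `Hperpᵀ` intersect trivially. -/
lemma ker_inter_trivial (hlp : l ≤ p) (hH : H.rank = l) (hHperp : Hperp.rank = p - l)
    (horth : Hᵀ * Hperp = 0) (v : Fin p → ℝ)
    (h1 : Hᵀ *ᵥ v = 0) (h2 : Hperpᵀ *ᵥ v = 0) : v = 0 := by
  -- range of Hperp is contained in ker of Hᵀ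
  have hle : LinearMap.range Hperp.mulVecLin ≤ LinearMap.ker Hᵀ.mulVecLin := by
    rintro _ ⟨y, rfl⟩
    simp only [LinearMap.mem_ker, mulVecLin_apply, mulVec_mulVec, horth, zero_mulVec]
  have hrankHT : Hᵀ.rank = l := by rw [rank_transpose, hH]
  have hkerdim : Module.finrank ℝ (LinearMap.ker Hᵀ.mulVecLin) = p - l := by
    have := LinearMap.finrank_range_add_finrank_ker Hᵀ.mulVecLin
    rw [Module.finrank_fintype_fun_eq_card, Fintype.card_fin] at this
    have hr : Module.finrank ℝ (LinearMap.range Hᵀ.mulVecLin) = l := hrankHT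
    omega
  have hrdim : Module.finrank ℝ (LinearMap.range Hperp.mulVecLin) = p - l := hHperp
  have heq : LinearMap.range Hperp.mulVecLin = LinearMap.ker Hᵀ.mulVecLin :=
    Submodule.eq_of_le_of_finrank_le hle (by rw [hkerdim, hrdim])
  have hv : v ∈ LinearMap.range Hperp.mulVecLin := by
    rw [heq]; exact h1
  obtain ⟨y, hy⟩ := hv
  have : y ∈ LinearMap.ker (Hperpᵀ * Hperp).mulVecLin := by
    simp only [LinearMap.mem_ker, mulVecLin_apply, ← mulVec_mulVec]
    rw [show Hperp *ᵥ y = v from hy, h2]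
  rw [Matrix.ker_mulVecLin_transpose_mul_self] at this
  simp only [LinearMap.mem_ker, mulVecLin_apply] at this
  rw [← hy]
  exact this

/-- The key rank inequality `rank ψ ≤ rank (Hᵀψ) + rank (H⊥ᵀψ)`. -/
lemma rank_le_rank_add_rank {s : ℕ} (hlp : l ≤ p) (hH : H.rank = l)
    (hHperp : Hperp.rank = p - l) (horth : Hᵀ * Hperp = 0)
    (ψ : Matrix (Fin p) (Fin s) ℝ) :
    ψ.rank ≤ (Hᵀ * ψ).rank + (Hperpᵀ * ψ).rank := by
  classical
  set fa := (Hᵀ * ψ).mulVecLin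
  set fb := (Hperpᵀ * ψ).mulVecLin
  set f := ψ.mulVecLin
  have hker : LinearMap.ker fa ⊓ LinearMap.ker fb ≤ LinearMap.ker f := by
    intro x hx
    rw [Submodule.mem_inf] at hx
    obtain ⟨hxa, hxb⟩ := hx
    simp only [LinearMap.mem_ker, mulVecLin_apply, fa, fb, ← mulVec_mulVec] at hxa hxb
    have := ker_inter_trivial H Hperp hlp hH hHperp horth (ψ *ᵥ x) hxa hxb
    simpa only [LinearMap.mem_ker, mulVecLin_apply, f] using this
  have ha := LinearMap.finrank_range_add_finrank_ker fa
  have hb := LinearMap.finrank_range_add_finrank_ker fb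
  have hf := LinearMap.finrank_range_add_finrank_ker f
  rw [Module.finrank_fintype_fun_eq_card, Fintype.card_fin] at ha hb hf
  have hsup := Submodule.finrank_sup_add_finrank_inf_eq (LinearMap.ker fa) (LinearMap.ker fb)
  have hsuple : Module.finrank ℝ ↥(LinearMap.ker fa ⊔ LinearMap.ker fb) ≤ s := by
    have := Submodule.finrank_le (LinearMap.ker fa ⊔ LinearMap.ker fb)
    rwa [Module.finrank_fintype_fun_eq_card, Fintype.card_fin] at this
  have hinfle : Module.finrank ℝ ↥(LinearMap.ker fa ⊓ LinearMap.ker fb) ≤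
      Module.finrank ℝ ↥(LinearMap.ker f) := Submodule.finrank_mono hker
  have hra : (Hᵀ * ψ).rank = Module.finrank ℝ ↥(LinearMap.range fa) := rfl
  have hrb : (Hperpᵀ * ψ).rank = Module.finrank ℝ ↥(LinearMap.range fb) := rfl
  have hrf : ψ.rank = Module.finrank ℝ ↥(LinearMap.range f) := rfl
  omega

end Aux

/-- Theorem 4.2 of Franchi–Paruolo: nesting of the subsets of the parameter space
under the null hypothesis and decomposition under the alternative. -/
theorem stmt4 (p l s : ℕ) (hlp : l ≤ p) (hsp : s ≤ p)
    (H : Matrix (Fin p) (Fin l) ℝ) (hH : H.rank = l)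
    (Hperp : Matrix (Fin p) (Fin (p - l)) ℝ) (hHperp : Hperp.rank = p - l)
    (horth : Hᵀ * Hperp = 0)
    (Ψ Ψ01 Ψ02 : Set (Matrix (Fin p) (Fin s) ℝ))
    (hΨ : Ψ = {ψ | ψ.rank = s})
    (hΨ01 : Ψ01 = {ψ ∈ Ψ | (Hᵀ * ψ).rank = min l s})
    (hΨ02 : Ψ02 = {ψ ∈ Ψ | (Hperpᵀ * ψ).rank = s - min l s}) :
    Ψ02 ⊆ Ψ01 ∧ (Ψ \ Ψ01) ∩ Ψ02 = ∅ ∧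
    Ψ \ (Ψ01 ∩ Ψ02) = Ψ \ Ψ02 ∧
    Ψ \ Ψ02 = (Ψ \ Ψ01) ∪ (Ψ01 \ Ψ02) := by
  have h01sub : Ψ01 ⊆ Ψ := by rw [hΨ01]; exact fun ψ hψ => hψ.1
  have hsub : Ψ02 ⊆ Ψ01 := by
    rw [hΨ01, hΨ02]
    rintro ψ ⟨hψΨ, hψ2⟩
    refine ⟨hψΨ, ?_⟩
    have hrψ : ψ.rank = s := by rw [hΨ] at hψΨ; exact hψΨ
    -- upper bound
    have hub : (Hᵀ * ψ).rank ≤ min l s := by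
      refine le_min ?_ ?_
      · have := Matrix.rank_le_card_height (Hᵀ * ψ)
        simpa using this
      · calc (Hᵀ * ψ).rank ≤ ψ.rank := Matrix.rank_mul_le_right Hᵀ ψ
          _ = s := hrψ
    -- lower bound
    have hlb := rank_le_rank_add_rank H Hperp hlp hH hHperp horth ψ
    rw [hrψ, hψ2] at hlb
    have hns : min l s ≤ s := min_le_right l s
    omega
  refine ⟨hsub, ?_, ?_, ?_⟩
  · ext ψ
    simp only [Set.mem_inter_iff, Set.mem_diff, Set.mem_empty_iff_false, iff_false, not_and]
    intro h1 h2
    exact absurd (hsub h2) h1.2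
  · ext ψ
    simp only [Set.mem_diff, Set.mem_inter_iff]
    constructor
    · rintro ⟨h1, h2⟩
      exact ⟨h1, fun h => h2 ⟨hsub h, h⟩⟩
    · rintro ⟨h1, h2⟩
      exact ⟨h1, fun h => h2 h.2⟩
  · ext ψ
    simp only [Set.mem_diff, Set.mem_union]
    constructor
    · rintro ⟨h1, h2⟩
      by_cases h01 : ψ ∈ Ψ01
      · exact Or.inr ⟨h01, h2⟩
      · exact Or.inl ⟨h1, h01⟩
    · rintro (⟨h1, h2⟩ | ⟨h1, h2⟩)
      · exact ⟨h1, fun h => h2 (hsub h)⟩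
      · exact ⟨h01sub h1, h2⟩
end

section
/- Let p ≥ 1 and s ≥ 1 be natural numbers, let ψ be a real p×s matrix with rank ψ = s, and let w ∈ ℝ^p be a vector with ⟨w, ι⟩ = 1, where ι ∈ ℝ^p is the vector of ones. Then the following are equivalent: (1) for every i ∈ {1,…,p}, the row vector (w − e_i)ᵀ satisfies (w − e_i)ᵀ·ψ = 0 (i.e. each vector w − e_i is orthogonal to the column space of ψ); (2) s = 1 and the column space of ψ equals the span of ι. -/
open Matrix

/-- Proposition 2.1(a) of Franchi–Paruolo (aggregation invariance, algebraic content):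
every `v_i = w − e_i` is orthogonal to the column space of `ψ` iff `s = 1` and
`col ψ = span {ι}`. -/
theorem stmt5 (p s : ℕ) (hp : 1 ≤ p) (hs : 1 ≤ s)
    (ψ : Matrix (Fin p) (Fin s) ℝ) (hψ : ψ.rank = s)
    (w : Fin p → ℝ) (hw : ∑ i, w i = 1) :
    (∀ i : Fin p, Matrix.vecMul (w - Pi.single i 1) ψ = 0) ↔
      (s = 1 ∧
        LinearMap.range ψ.mulVecLin = Submodule.span ℝ {(fun _ => 1 : Fin p → ℝ)}) := by
  have hιne : (fun _ => (1:ℝ) : Fin p → ℝ) ≠ 0 := by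
    intro h
    have := congrFun h ⟨0, hp⟩
    simp at this
  constructor
  · intro h
    -- all rows of ψ are equal to c
    set c : Fin s → ℝ := fun k => ∑ j, w j * ψ j k with hc
    have hrow : ∀ i k, ψ i k = c k := by
      intro i k
      have h1 := congrFun (h i) k
      simp only [Matrix.vecMul, dotProduct, Pi.sub_apply, sub_mul,
        Finset.sum_sub_distrib, Pi.zero_apply] at h1
      have h2 : ∑ j, (Pi.single i 1 : Fin p → ℝ) j * ψ j k = ψ i k := by
        rw [Finset.sum_eq_single i]
        · simp
        · intro b _ hb; simp [Pi.single_eq_of_ne hb]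
        · intro hb; exact absurd (Finset.mem_univ i) hb
      rw [h2] at h1
      have := sub_eq_zero.mp h1
      rw [← this]
    -- range ⊆ span ι
    have hle : LinearMap.range ψ.mulVecLin ≤
        Submodule.span ℝ {(fun _ => 1 : Fin p → ℝ)} := by
      rintro _ ⟨x, rfl⟩
      have : ψ.mulVecLin x = (∑ k, c k * x k) • (fun _ => 1 : Fin p → ℝ) := by
        funext j
        simp [Matrix.mulVecLin, Matrix.mulVec, dotProduct, hrow j]
      rw [this]
      exact Submodule.smul_mem _ _ (Submodule.mem_span_singleton_self _)
    have hspanfd : FiniteDimensional ℝ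
        (Submodule.span ℝ {(fun _ => 1 : Fin p → ℝ)}) := inferInstance
    have hfr1 : Module.finrank ℝ
        (Submodule.span ℝ {(fun _ => 1 : Fin p → ℝ)}) = 1 :=
      finrank_span_singleton hιne
    have hrle : ψ.rank ≤ 1 := by
      rw [Matrix.rank]
      calc Module.finrank ℝ (LinearMap.range ψ.mulVecLin)
          ≤ Module.finrank ℝ (Submodule.span ℝ {(fun _ => 1 : Fin p → ℝ)}) :=
            Submodule.finrank_mono hle
        _ = 1 := hfr1
    have hs1 : s = 1 := le_antisymm (hψ ▸ hrle) hs
    refine ⟨hs1, ?_⟩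
    apply Submodule.eq_of_le_of_finrank_eq hle
    rw [← Matrix.rank, hψ, hs1, hfr1]
  · rintro ⟨rfl, hcol⟩
    -- the single column of ψ is constant
    have hmem : ψ.mulVecLin (Pi.single 0 1) ∈
        Submodule.span ℝ {(fun _ => 1 : Fin p → ℝ)} := by
      rw [← hcol]; exact ⟨_, rfl⟩
    obtain ⟨a, ha⟩ := Submodule.mem_span_singleton.mp hmem
    have hcolconst : ∀ j : Fin p, ψ j 0 = a := by
      intro j
      have := congrFun ha j
      simp [Matrix.mulVecLin, Matrix.mulVec, dotProduct] at this
      linarith [this]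
    intro i
    funext k
    have hk : k = 0 := Subsingleton.elim k 0
    subst hk
    simp only [Matrix.vecMul, dotProduct, Pi.sub_apply, sub_mul,
      Finset.sum_sub_distrib, Pi.zero_apply]
    have h2 : ∑ j, (Pi.single i 1 : Fin p → ℝ) j * ψ j 0 = ψ i 0 := by
      rw [Finset.sum_eq_single i]
      · simp
      · intro b _ hb; simp [Pi.single_eq_of_ne hb]
      · intro hb; exact absurd (Finset.mem_univ i) hb
    rw [h2]
    have h3 : ∑ j, w j * ψ j 0 = a := by
      simp only [hcolconst]
      rw [← Finset.sum_mul, hw, one_mul]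
    rw [h3, hcolconst i, sub_self]
end

section
/- Let p ≥ 1 be a natural number and let w ∈ ℝ^p be a vector with ⟨w, ι⟩ = 1, where ι ∈ ℝ^p is the vector of ones. Define v_i := w − e_i for i = 1,…,p. Then the linear span of {v_1,…,v_p} equals the linear span of {e_1 − e_p, e_2 − e_p, …, e_{p−1} − e_p}, and this subspace has dimension p − 1. -/
/-- Core linear-algebra step in the proof of Proposition 2.1 of Franchi–Paruolo:
`span {v_1,…,v_p} = span {e_1 − e_p, …, e_{p−1} − e_p}` and this subspace has
dimension `p − 1`, where `v_i = w − e_i` and `⟨w, ι⟩ = 1`. -/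
theorem stmt6 (p : ℕ) (hp : 1 ≤ p) (w : Fin p → ℝ) (hw : ∑ i, w i = 1) :
    Submodule.span ℝ (Set.range (fun i : Fin p => w - Pi.single i 1)) =
      Submodule.span ℝ (Set.range (fun j : Fin (p - 1) =>
        (Pi.single (Fin.castLE (Nat.sub_le p 1) j) 1 : Fin p → ℝ) -
          Pi.single (⟨p - 1, by omega⟩ : Fin p) 1)) ∧
    Module.finrank ℝ
      (Submodule.span ℝ (Set.range (fun i : Fin p => w - Pi.single i 1))) = p - 1 := by
  have hplt : p - 1 < p := by omega
  set last : Fin p := ⟨p - 1, hplt⟩ with hlast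
  set d : Fin (p - 1) → (Fin p → ℝ) := fun j =>
    (Pi.single (Fin.castLE (Nat.sub_le p 1) j) 1 : Fin p → ℝ) - Pi.single last 1 with hd
  set v : Fin p → (Fin p → ℝ) := fun i => w - Pi.single i 1 with hv
  -- w - e_last = ∑ j, w j • (e j - e last)
  have hw_last : w - Pi.single last (1:ℝ) =
      ∑ j : Fin p, w j • ((Pi.single j 1 : Fin p → ℝ) - Pi.single last 1) := by
    have h1 : ∑ j : Fin p, w j • (Pi.single j (1:ℝ) : Fin p → ℝ) = w := by
      have : ∀ j : Fin p, w j • (Pi.single j (1:ℝ) : Fin p → ℝ) = Pi.single j (w j) := by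
        intro j
        ext k
        by_cases h : k = j <;> simp [Pi.single_apply, h]
      simp only [this]
      exact Finset.univ_sum_single w
    have h2 : ∑ j : Fin p, w j • (Pi.single last (1:ℝ) : Fin p → ℝ)
        = Pi.single last (1:ℝ) := by
      rw [← Finset.sum_smul, hw, one_smul]
    simp only [smul_sub, Finset.sum_sub_distrib, h1, h2]
  -- each e i - e last is in span of d
  have hu_mem : ∀ i : Fin p,
      (Pi.single i 1 : Fin p → ℝ) - Pi.single last 1 ∈ Submodule.span ℝ (Set.range d) := by
    intro i
    by_cases h : i = last
    · rw [h, sub_self]; exact Submodule.zero_mem _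
    · have hi : (i : ℕ) < p - 1 := by
        have := i.isLt
        rcases Nat.lt_or_ge (i : ℕ) (p - 1) with h' | h'
        · exact h'
        · exact absurd (Fin.ext (show (i:ℕ) = p - 1 by omega)) h
      have : d ⟨i, hi⟩ = (Pi.single i 1 : Fin p → ℝ) - Pi.single last 1 := by
        simp [hd, Fin.castLE]
      rw [← this]
      exact Submodule.subset_span ⟨⟨i, hi⟩, rfl⟩
  have hspan : Submodule.span ℝ (Set.range v) = Submodule.span ℝ (Set.range d) := by
    apply le_antisymm
    · rw [Submodule.span_le]
      rintro _ ⟨i, rfl⟩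
      have : v i = (w - Pi.single last 1) - ((Pi.single i 1 : Fin p → ℝ) - Pi.single last 1) := by
        simp [hv]; try abel
      rw [this, hw_last]
      exact sub_mem (Submodule.sum_mem _ (fun j _ => Submodule.smul_mem _ _ (hu_mem j))) (hu_mem i)
    · rw [Submodule.span_le]
      rintro _ ⟨j, rfl⟩
      have : d j = v last - v (Fin.castLE (Nat.sub_le p 1) j) := by
        simp [hd, hv]; try abel
      rw [this]
      exact sub_mem (Submodule.subset_span ⟨last, rfl⟩)
        (Submodule.subset_span ⟨_, rfl⟩)
  have hlin : LinearIndependent ℝ d := by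
    rw [Fintype.linearIndependent_iff]
    intro g hg i
    have := congrFun hg (Fin.castLE (Nat.sub_le p 1) i)
    simp only [Finset.sum_apply, Pi.smul_apply, Pi.sub_apply, hd, Pi.single_apply,
      Pi.zero_apply] at this
    have hne : last ≠ Fin.castLE (Nat.sub_le p 1) i := by
      intro h
      have := congrArg Fin.val h
      simp [hlast] at this
      omega
    rw [Finset.sum_eq_single i] at this
    · simpa [Ne.symm hne] using this
    · intro b _ hb
      have hbne : Fin.castLE (Nat.sub_le p 1) b ≠ Fin.castLE (Nat.sub_le p 1) i := by
        intro h; exact hb (by exact Fin.castLE_injective _ h)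
      simp [Ne.symm hb, Ne.symm hne, hbne]
    · intro h; exact absurd (Finset.mem_univ i) h
  refine ⟨hspan, ?_⟩
  rw [hspan, finrank_span_eq_card hlin]
  simp
end

section
/- For j ∈ ℕ define η_j := (−1)^j·(binomial(2j, j))/4^j (the generalized binomial coefficient binom(−1/2, j)) and a_j := 2j + 1/2. Then for every real t > 0, ∫_t^∞ (1/√(πz))·(Σ_{j=0}^∞ η_j·a_j·exp(−(a_j²/2)·z)) dz = √(2/π)·Σ_{j=0}^∞ η_j·∫_{a_j²·t/2}^∞ x^{−1/2}·e^{−x} dx, where both the outer integral and both series converge. -/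
open MeasureTheory Real

/-- `η_j = binom(−1/2, j) = (−1)^j (2j choose j) / 4^j`. -/
noncomputable def eta (j : ℕ) : ℝ := (-1) ^ j * (Nat.choose (2 * j) j) / 4 ^ j

/-- `a_j = 2j + 1/2`. -/
noncomputable def aC (j : ℕ) : ℝ := 2 * j + 1 / 2

/-!
On `[t, ∞)` the `j`-th term of the density series is bounded by `(2j+1) e^{-jt}` times
`e^{-z/8} / √(πt)`: a summable sequence times an integrable function. Dominated convergence
then lets the series be integrated termwise, and the substitution `x = (a_j²/2) z` turns the
`j`-th integral into `√(2/π) η_j Γ(1/2, a_j² t / 2)`.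
-/

open Set Filter

theorem integrable_tsum_and_hasSum_integral_of_norm_le_mul {α E : Type*} [MeasurableSpace α]
    {μ : Measure α} [NormedAddCommGroup E] [NormedSpace ℝ E] [CompleteSpace E]
    {F : ℕ → α → E} {c : ℕ → ℝ} {g : α → ℝ} (hF : ∀ j, AEStronglyMeasurable (F j) μ) (hc : Summable c)
    (hg : Integrable g μ) (hbound : ∀ j, ∀ᵐ x ∂μ, ‖F j x‖ ≤ c j * g x) :
    Integrable (fun x => ∑' j, F j x) μ ∧
      HasSum (fun j => ∫ x, F j x ∂μ) (∫ x, ∑' j, F j x ∂μ) := by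
  have hbound' : ∀ᵐ x ∂μ, ∀ j, ‖F j x‖ ≤ c j * g x := ae_all_iff.2 hbound
  have hsum : ∀ᵐ x ∂μ, HasSum (fun j => F j x) (∑' j, F j x) := by
    filter_upwards [hbound'] with x hx
    exact (Summable.of_norm_bounded (hc.mul_right (g x)) hx).hasSum
  have hdom : Integrable (fun x => ∑' j, c j * g x) μ := by
    simpa only [tsum_mul_right] using hg.const_mul (∑' j, c j)
  refine ⟨hdom.mono' ?_ ?_, hasSum_integral_of_dominated_convergence _ hF hbound
    (ae_of_all _ fun x => hc.mul_right (g x)) hdom hsum⟩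
  · exact aestronglyMeasurable_of_tendsto_ae atTop
      (fun n => Finset.aestronglyMeasurable_fun_sum (Finset.range n) fun j _ => hF j)
      (hsum.mono fun x hx => hx.tendsto_sum_nat)
  · filter_upwards [hbound'] with x hx
    exact tsum_of_norm_bounded (hc.mul_right (g x)).hasSum hx

theorem integral_Ioi_rpow_mul_exp_neg_mul {s b t : ℝ} (hb : 0 < b) (ht : 0 ≤ t) :
    ∫ z in Ioi t, z ^ s * exp (-(b * z)) =
      b ^ (-(s + 1)) * ∫ x in Ioi (b * t), x ^ s * exp (-x) := by
  have hscale : EqOn (fun z => z ^ s * exp (-(b * z)))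
      (fun z => b ^ (-s) * ((b * z) ^ s * exp (-(b * z)))) (Ioi t) := by
    intro z hz
    dsimp only
    rw [mul_rpow hb.le (ht.trans (le_of_lt hz)), ← mul_assoc, ← mul_assoc,
      ← rpow_add hb, neg_add_cancel, rpow_zero, one_mul]
  rw [setIntegral_congr_fun measurableSet_Ioi hscale, integral_const_mul,
    integral_comp_mul_left_Ioi (fun x => x ^ s * exp (-x)) t hb, smul_eq_mul, ← mul_assoc,
    ← rpow_neg_one, ← rpow_add hb, neg_add]

theorem integral_Ioi_density_term (e : ℝ) {a t : ℝ} (ha : 0 < a) (ht : 0 ≤ t) :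
    ∫ z in Ioi t, 1 / √(π * z) * (e * a * exp (-(a ^ 2 / 2) * z)) =
      √(2 / π) * (e * ∫ x in Ioi (a ^ 2 * t / 2), x ^ (-(1 : ℝ) / 2) * exp (-x)) := by
  have hb : 0 < a ^ 2 / 2 := by positivity
  have hpoint : EqOn (fun z => 1 / √(π * z) * (e * a * exp (-(a ^ 2 / 2) * z)))
      (fun z => e * a / √π * (z ^ (-(1 : ℝ) / 2) * exp (-(a ^ 2 / 2 * z)))) (Ioi t) := by
    intro z hz
    have hz : 0 < z := ht.trans_lt hz
    dsimp only
    rw [neg_div, rpow_neg hz.le, ← sqrt_eq_rpow, sqrt_mul pi_pos.le, neg_mul]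
    field_simp
  rw [setIntegral_congr_fun measurableSet_Ioi hpoint, integral_const_mul,
    integral_Ioi_rpow_mul_exp_neg_mul hb ht, ← mul_assoc, ← mul_assoc (√(2 / π)),
    div_mul_eq_mul_div (a ^ 2) 2 t]
  congr 1
  rw [show -(-(1 : ℝ) / 2 + 1) = -(1 / 2) by norm_num, rpow_neg hb.le, ← sqrt_eq_rpow,
    sqrt_div' _ two_pos.le, sqrt_sq ha.le, sqrt_div' _ pi_pos.le]
  field_simp

theorem abs_eta_le_one (j : ℕ) : |eta j| ≤ 1 := by
  have hchoose : ((2 * j).choose j : ℝ) ≤ 4 ^ j := by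
    exact_mod_cast Nat.centralBinom_eq_two_mul_choose j ▸ Nat.centralBinom_le_four_pow j
  rw [eta, abs_div, abs_mul, abs_pow, abs_neg, abs_one, one_pow, one_mul, Nat.abs_cast,
    abs_of_pos (by positivity), div_le_one (by positivity)]
  exact hchoose

theorem aC_pos (j : ℕ) : 0 < aC j := by
  unfold aC; positivity

theorem abs_density_term_le {t z : ℝ} (ht : 0 < t) (hz : t ≤ z) (j : ℕ) :
    |eta j * aC j * exp (-(aC j ^ 2 / 2) * z)| ≤
      (2 * j + 1) * exp (-t) ^ j * exp (-(z / 8)) := by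
  have haC : aC j ≤ 2 * j + 1 := by unfold aC; linarith
  have hexp : exp (-(aC j ^ 2 / 2) * z) ≤ exp (-t) ^ j * exp (-(z / 8)) := by
    rw [← exp_nat_mul, ← exp_add, exp_le_exp]
    -- `a_j² / 2 = 2j² + j + 1/8`, and `(2j² + j) z ≥ j t`
    have hj : (0 : ℝ) ≤ j := j.cast_nonneg
    unfold aC
    nlinarith [mul_nonneg (mul_nonneg hj hj) (ht.le.trans hz), mul_nonneg hj (sub_nonneg.2 hz)]
  rw [abs_mul, abs_mul, abs_of_pos (aC_pos j), abs_of_pos (exp_pos _), mul_assoc, mul_assoc]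
  exact (mul_le_of_le_one_left (mul_pos (aC_pos j) (exp_pos _)).le (abs_eta_le_one j)).trans
    (mul_le_mul haC hexp (exp_pos _).le (by positivity))

theorem norm_density_term_le {t z : ℝ} (ht : 0 < t) (hz : t ≤ z) (j : ℕ) :
    ‖1 / √(π * z) * (eta j * aC j * exp (-(aC j ^ 2 / 2) * z))‖ ≤
      (2 * j + 1) * exp (-t) ^ j * (exp (-(z / 8)) / √(π * t)) := by
  have hsqrt : √(π * t) ≤ √(π * z) := sqrt_le_sqrt (by gcongr)
  rw [norm_mul, norm_of_nonneg (by positivity), Real.norm_eq_abs, mul_div_assoc',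
    one_div_mul_eq_div]
  exact div_le_div₀ (by positivity) (abs_density_term_le ht hz j) (sqrt_pos.2 (by positivity))
    hsqrt

theorem summable_two_mul_add_one_mul_exp_neg_pow {t : ℝ} (ht : 0 < t) :
    Summable fun j : ℕ => (2 * j + 1) * exp (-t) ^ j := by
  have hr : ‖exp (-t)‖ < 1 := by
    rw [norm_of_nonneg (exp_pos _).le, exp_lt_one_iff]; linarith
  exact (((summable_pow_mul_geometric_of_norm_lt_one 1 hr).mul_left 2).add
    (summable_geometric_of_norm_lt_one hr)).congr fun j => by ring

/-- Analytic identity in the proof of Theorem 6.1 of Franchi–Paruolo: the tail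
integral of the density `f_ζ` equals a series of upper incomplete Gamma terms
`√(2/π) Σ_j η_j Γ(1/2, a_j² t / 2)`; both series and the integral converge. -/
theorem stmt14 (t : ℝ) (ht : 0 < t) :
    (∀ z : ℝ, 0 < z →
      Summable fun j : ℕ => eta j * aC j * Real.exp (-((aC j) ^ 2 / 2) * z)) ∧
    (Summable fun j : ℕ =>
      eta j * ∫ x in Set.Ioi ((aC j) ^ 2 * t / 2), x ^ (-(1 : ℝ) / 2) * Real.exp (-x)) ∧
    IntegrableOn
      (fun z => (1 / Real.sqrt (π * z)) *
        ∑' j : ℕ, eta j * aC j * Real.exp (-((aC j) ^ 2 / 2) * z)) (Set.Ioi t) ∧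
    ∫ z in Set.Ioi t,
        (1 / Real.sqrt (π * z)) *
          ∑' j : ℕ, eta j * aC j * Real.exp (-((aC j) ^ 2 / 2) * z) =
      Real.sqrt (2 / π) *
        ∑' j : ℕ, eta j *
          ∫ x in Set.Ioi ((aC j) ^ 2 * t / 2), x ^ (-(1 : ℝ) / 2) * Real.exp (-x) := by
  set F : ℕ → ℝ → ℝ := fun j z =>
    1 / √(π * z) * (eta j * aC j * exp (-(aC j ^ 2 / 2) * z))
  have hmeas : ∀ j, AEStronglyMeasurable (F j) (volume.restrict (Ioi t)) := fun j =>
    (by fun_prop : Measurable (F j)).aestronglyMeasurable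
  have hdom : Integrable (fun z => exp (-(z / 8)) / √(π * t)) (volume.restrict (Ioi t)) := by
    simpa only [div_eq_inv_mul, ← neg_mul] using
      (exp_neg_integrableOn_Ioi t (by norm_num : (0 : ℝ) < 8⁻¹)).div_const (√(π * t))
  have hbound : ∀ j, ∀ᵐ z ∂volume.restrict (Ioi t),
      ‖F j z‖ ≤ (2 * j + 1) * exp (-t) ^ j * (exp (-(z / 8)) / √(π * t)) := fun j =>
    (ae_restrict_mem measurableSet_Ioi).mono fun z hz => norm_density_term_le ht (le_of_lt hz) j
  obtain ⟨hint, hsum⟩ := integrable_tsum_and_hasSum_integral_of_norm_le_mul hmeas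
    (summable_two_mul_add_one_mul_exp_neg_pow ht) hdom hbound
  simp only [F, tsum_mul_left, integral_Ioi_density_term _ (aC_pos _) ht.le] at hint hsum
  refine ⟨fun z hz => ?_, (summable_mul_left_iff (by positivity)).1 hsum.summable, hint,
    hsum.tsum_eq.symm.trans tsum_mul_left⟩
  exact Summable.of_norm_bounded ((summable_two_mul_add_one_mul_exp_neg_pow hz).mul_right _)
    (abs_density_term_le hz le_rfl)
end
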